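/- Let k ≥ 1 and ℓ ≤ 2k−1 be integers, let G = (V,E) be a graph, and suppose m = min over partitions 𝒴 of E of Σ_{Y∈𝒴}(k|V(Y)|−ℓ). Then there exists a 1-thin cover 𝒳 of G (a family of vertex sets of size ≥ 2, pairwise intersecting in at most one vertex, covering all edges) with Σ_{X∈𝒳}(k|X|−ℓ) = m. Moreover, if 0 < ℓ ≤ k the cover can be chosen 0-thin (pairwise disjoint), and if ℓ ≤ 0 then m = k|V(E)|−ℓ. -/

import Mathlib

open scoped Classical

/-- The set of vertices of the multigraph `ends` incident to an edge in `Y`. -/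
noncomputable def incVertsM {V E : Type} [Fintype V] (ends : E → Sym2 V) (Y : Finset E) :
    Finset V :=
  Finset.univ.filter (fun v => ∃ e ∈ Y, v ∈ ends e)

lemma incVertsM_union {V E : Type} [Fintype V] (ends : E → Sym2 V) (Y₁ Y₂ : Finset E) :
    incVertsM ends (Y₁ ∪ Y₂) = incVertsM ends Y₁ ∪ incVertsM ends Y₂ := by
  ext v
  simp only [incVertsM, Finset.mem_filter, Finset.mem_union, Finset.mem_univ, true_and]
  constructor
  · rintro ⟨e, he | he, hv⟩
    · exact Or.inl ⟨e, he, hv⟩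
    · exact Or.inr ⟨e, he, hv⟩
  · rintro (⟨e, he, hv⟩ | ⟨e, he, hv⟩)
    · exact ⟨e, Or.inl he, hv⟩
    · exact ⟨e, Or.inr he, hv⟩

lemma two_le_card_incVertsM {V E : Type} [Fintype V] (ends : E → Sym2 V)
    (hloop : ∀ e, ¬ (ends e).IsDiag) {Y : Finset E} (hY : Y.Nonempty) :
    2 ≤ (incVertsM ends Y).card := by
  obtain ⟨e, he⟩ := hY
  obtain ⟨⟨a, b⟩, hab⟩ := Quot.exists_rep (ends e)
  have hends : ends e = s(a, b) := hab.symm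
  have hne : a ≠ b := by
    intro h
    exact hloop e (by rw [hends, h]; exact Sym2.mk_isDiag_iff.2 rfl)
  have ha : a ∈ incVertsM ends Y := by
    simp only [incVertsM, Finset.mem_filter, Finset.mem_univ, true_and]
    exact ⟨e, he, by rw [hends]; simp⟩
  have hb : b ∈ incVertsM ends Y := by
    simp only [incVertsM, Finset.mem_filter, Finset.mem_univ, true_and]
    exact ⟨e, he, by rw [hends]; simp⟩
  exact Finset.one_lt_card.2 ⟨a, ha, b, hb, hne⟩

lemma merge_finpartition {E : Type} [Fintype E] (f : Finset E → ℤ)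
    (𝒴 : Finpartition (Finset.univ : Finset E)) {Y₁ Y₂ : Finset E}
    (h₁ : Y₁ ∈ 𝒴.parts) (h₂ : Y₂ ∈ 𝒴.parts) (hne : Y₁ ≠ Y₂) :
    ∃ 𝒵 : Finpartition (Finset.univ : Finset E),
      (∑ Y ∈ 𝒵.parts, f Y) + f Y₁ + f Y₂ = (∑ Y ∈ 𝒴.parts, f Y) + f (Y₁ ∪ Y₂) ∧
      𝒵.parts.card + 1 = 𝒴.parts.card := by
  set T := (𝒴.parts.erase Y₁).erase Y₂ with hT
  have hY₁ne : Y₁.Nonempty := 𝒴.nonempty_of_mem_parts h₁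
  have hdisj := 𝒴.disjoint
  have h₂' : Y₂ ∈ 𝒴.parts.erase Y₁ := Finset.mem_erase.2 ⟨hne.symm, h₂⟩
  have hTsub : T ⊆ 𝒴.parts := (Finset.erase_subset _ _).trans (Finset.erase_subset _ _)
  have hY₁T : Y₁ ∉ T := fun h => (Finset.mem_erase.1 (Finset.mem_erase.1 h).2).1 rfl
  have hY₂T : Y₂ ∉ T := fun h => (Finset.mem_erase.1 h).1 rfl
  have e1 : 𝒴.parts = insert Y₁ (insert Y₂ T) := by
    rw [hT, Finset.insert_erase h₂', Finset.insert_erase h₁]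
  have hnotmem : Y₁ ∪ Y₂ ∉ T := by
    intro h
    have h' : Y₁ ∪ Y₂ ∈ 𝒴.parts := hTsub h
    have hne' : Y₁ ≠ Y₁ ∪ Y₂ := by
      intro heq; exact hY₁T (heq ▸ h)
    have hd : Disjoint Y₁ (Y₁ ∪ Y₂) := hdisj h₁ h' hne'
    obtain ⟨e, he⟩ := hY₁ne
    exact (Finset.disjoint_left.1 hd he) (Finset.mem_union_left _ he)
  refine ⟨⟨insert (Y₁ ∪ Y₂) T, ?_, ?_, ?_⟩, ?_, ?_⟩
  · rw [Finset.supIndep_iff_pairwiseDisjoint]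
    intro a ha b hb hab
    simp only [Finset.coe_insert, Set.mem_insert_iff, Finset.mem_coe] at ha hb
    rcases ha with rfl | ha <;> rcases hb with rfl | hb
    · exact absurd rfl hab
    · have hb' := hTsub hb
      have d1 : Disjoint Y₁ b := hdisj h₁ hb' (fun h => hY₁T (h ▸ hb))
      have d2 : Disjoint Y₂ b := hdisj h₂ hb' (fun h => hY₂T (h ▸ hb))
      simpa [Function.onFun, Finset.disjoint_union_left] using And.intro d1 d2
    · have ha' := hTsub ha
      have d1 : Disjoint Y₁ a := hdisj h₁ ha' (fun h => hY₁T (h ▸ ha))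
      have d2 : Disjoint Y₂ a := hdisj h₂ ha' (fun h => hY₂T (h ▸ ha))
      have : Disjoint (Y₁ ∪ Y₂) a := by
        simpa [Finset.disjoint_union_left] using And.intro d1 d2
      simpa [Function.onFun] using this.symm
    · exact hdisj (hTsub ha) (hTsub hb) hab
  · have := 𝒴.sup_parts
    rw [e1] at this
    simp only [Finset.sup_insert, id] at this ⊢
    rw [← this]
    rw [Finset.sup_eq_union, Finset.union_assoc]
    rfl
  · intro h
    rcases Finset.mem_insert.1 h with h | h
    · rw [Finset.bot_eq_empty] at h
      exact hY₁ne.ne_empty (Finset.union_eq_empty.1 h.symm).1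
    · exact 𝒴.bot_notMem (hTsub h)
  · rw [Finset.sum_insert hnotmem]
    rw [e1, Finset.sum_insert (by simp [hY₁T, hne]), Finset.sum_insert hY₂T]
    ring
  · rw [Finset.card_insert_of_notMem hnotmem, hT,
      Finset.card_erase_of_mem h₂', Finset.card_erase_of_mem h₁]
    have : 2 ≤ 𝒴.parts.card := Finset.one_lt_card.2 ⟨Y₁, h₁, Y₂, h₂, hne⟩
    omega

/-- Let `m` be the minimum over partitions `𝒴` of the edge set `E` of
`Σ_{Y∈𝒴}(k|V(Y)| - ℓ)`, where `k ≥ 1` and `ℓ ≤ 2k-1`. Then (a) some `1`-thin cover of `G`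
attains value `m`; (b) if `0 < ℓ ≤ k`, some `0`-thin cover attains `m`; and (c) if `ℓ ≤ 0`
then `m = k|V(E)| - ℓ`. -/
theorem stmt_15 {V E : Type} [Fintype V] [Fintype E] [Nonempty E]
    (ends : E → Sym2 V) (hloop : ∀ e, ¬ (ends e).IsDiag)
    (k ℓ : ℤ) (hk : 1 ≤ k) (hl : ℓ ≤ 2 * k - 1) (m : ℤ)
    (hm : IsLeast {v : ℤ | ∃ 𝒴 : Finpartition (Finset.univ : Finset E),
      v = ∑ Y ∈ 𝒴.parts, (k * (incVertsM ends Y).card - ℓ)} m) :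
    (∃ 𝒳 : Finset (Finset V),
      (∀ X ∈ 𝒳, 2 ≤ X.card) ∧
      (∀ e : E, ∃ X ∈ 𝒳, ∀ v ∈ ends e, v ∈ X) ∧
      (∀ X ∈ 𝒳, ∀ X' ∈ 𝒳, X ≠ X' → (X ∩ X').card ≤ 1) ∧
      ∑ X ∈ 𝒳, (k * X.card - ℓ) = m) ∧
    ((0 < ℓ → ℓ ≤ k →
      ∃ 𝒳 : Finset (Finset V),
        (∀ X ∈ 𝒳, 2 ≤ X.card) ∧
        (∀ e : E, ∃ X ∈ 𝒳, ∀ v ∈ ends e, v ∈ X) ∧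
        (∀ X ∈ 𝒳, ∀ X' ∈ 𝒳, X ≠ X' → (X ∩ X').card = 0) ∧
        ∑ X ∈ 𝒳, (k * X.card - ℓ) = m)) ∧
    (ℓ ≤ 0 →
      m = k * ((Finset.univ.filter (fun v : V => ∃ e : E, v ∈ ends e)).card : ℤ) - ℓ) := by
  classical
  obtain ⟨hmem, hlb⟩ := hm
  have hge : ∀ P : Finpartition (Finset.univ : Finset E),
      m ≤ ∑ Y ∈ P.parts, (k * ((incVertsM ends Y).card : ℤ) - ℓ) := fun P => hlb ⟨P, rfl⟩
  have hexn : ∃ n, ∃ P : Finpartition (Finset.univ : Finset E),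
      (∑ Y ∈ P.parts, (k * ((incVertsM ends Y).card : ℤ) - ℓ)) = m ∧ P.parts.card = n := by
    obtain ⟨P, h⟩ := hmem
    exact ⟨_, P, h.symm, rfl⟩
  obtain ⟨𝒴, hvalm, hcardn⟩ := Nat.find_spec hexn
  -- value of the merged partition
  have hmerge : ∀ Y₁ ∈ 𝒴.parts, ∀ Y₂ ∈ 𝒴.parts, Y₁ ≠ Y₂ →
      ∃ 𝒵 : Finpartition (Finset.univ : Finset E),
        (∑ Y ∈ 𝒵.parts, (k * ((incVertsM ends Y).card : ℤ) - ℓ))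
          = m + ℓ - k * ((incVertsM ends Y₁ ∩ incVertsM ends Y₂).card : ℤ) ∧
        𝒵.parts.card + 1 = 𝒴.parts.card := by
    intro Y₁ h₁ Y₂ h₂ hne
    obtain ⟨𝒵, hsum, hc⟩ :=
      merge_finpartition (fun Y => k * ((incVertsM ends Y).card : ℤ) - ℓ) 𝒴 h₁ h₂ hne
    refine ⟨𝒵, ?_, hc⟩
    simp only [incVertsM_union, hvalm] at hsum
    have hcu : ((incVertsM ends Y₁ ∪ incVertsM ends Y₂).card : ℤ)
        + ((incVertsM ends Y₁ ∩ incVertsM ends Y₂).card : ℤ)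
        = ((incVertsM ends Y₁).card : ℤ) + ((incVertsM ends Y₂).card : ℤ) := by
      exact_mod_cast Finset.card_union_add_card_inter _ _
    linear_combination hsum + k * hcu
  -- 1-thinness of the minimal partition
  have thin1 : ∀ Y₁ ∈ 𝒴.parts, ∀ Y₂ ∈ 𝒴.parts, Y₁ ≠ Y₂ →
      (incVertsM ends Y₁ ∩ incVertsM ends Y₂).card ≤ 1 := by
    intro Y₁ h₁ Y₂ h₂ hne
    by_contra hcon
    push_neg at hcon
    obtain ⟨𝒵, hval, _⟩ := hmerge Y₁ h₁ Y₂ h₂ hne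
    have h2 : (2 : ℤ) ≤ ((incVertsM ends Y₁ ∩ incVertsM ends Y₂).card : ℤ) := by
      exact_mod_cast hcon
    have := hge 𝒵
    nlinarith [this, hval]
  -- 0-thinness when ℓ ≤ k
  have thin0 : ℓ ≤ k → ∀ Y₁ ∈ 𝒴.parts, ∀ Y₂ ∈ 𝒴.parts, Y₁ ≠ Y₂ →
      (incVertsM ends Y₁ ∩ incVertsM ends Y₂).card = 0 := by
    intro hlk Y₁ h₁ Y₂ h₂ hne
    by_contra hcon
    have h1 : (1 : ℤ) ≤ ((incVertsM ends Y₁ ∩ incVertsM ends Y₂).card : ℤ) := by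
      have : 1 ≤ (incVertsM ends Y₁ ∩ incVertsM ends Y₂).card := Nat.one_le_iff_ne_zero.2 hcon
      exact_mod_cast this
    obtain ⟨𝒵, hval, hc⟩ := hmerge Y₁ h₁ Y₂ h₂ hne
    have hup : (∑ Y ∈ 𝒵.parts, (k * ((incVertsM ends Y).card : ℤ) - ℓ)) ≤ m := by
      nlinarith [hval]
    have heq : (∑ Y ∈ 𝒵.parts, (k * ((incVertsM ends Y).card : ℤ) - ℓ)) = m :=
      le_antisymm hup (hge 𝒵)
    have hlt : 𝒵.parts.card < Nat.find hexn := by omega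
    exact Nat.find_min hexn hlt ⟨𝒵, heq, rfl⟩
  -- the cover
  set 𝒳 := 𝒴.parts.image (fun Y => incVertsM ends Y) with h𝒳
  have hinj : ∀ Y₁ ∈ 𝒴.parts, ∀ Y₂ ∈ 𝒴.parts,
      incVertsM ends Y₁ = incVertsM ends Y₂ → Y₁ = Y₂ := by
    intro Y₁ h₁ Y₂ h₂ heq
    by_contra hne
    have := thin1 Y₁ h₁ Y₂ h₂ hne
    rw [heq, Finset.inter_self] at this
    have := two_le_card_incVertsM ends hloop (𝒴.nonempty_of_mem_parts h₂)
    omega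
  have hcard2 : ∀ X ∈ 𝒳, 2 ≤ X.card := by
    intro X hX
    obtain ⟨Y, hY, rfl⟩ := Finset.mem_image.1 hX
    exact two_le_card_incVertsM ends hloop (𝒴.nonempty_of_mem_parts hY)
  have hcover : ∀ e : E, ∃ X ∈ 𝒳, ∀ v ∈ ends e, v ∈ X := by
    intro e
    obtain ⟨Y, hY, heY⟩ := 𝒴.exists_mem (Finset.mem_univ e)
    refine ⟨incVertsM ends Y, Finset.mem_image_of_mem _ hY, fun v hv => ?_⟩
    simp only [incVertsM, Finset.mem_filter, Finset.mem_univ, true_and]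
    exact ⟨e, heY, hv⟩
  have hsum𝒳 : ∑ X ∈ 𝒳, (k * (X.card : ℤ) - ℓ) = m := by
    rw [h𝒳, Finset.sum_image hinj, hvalm]
  refine ⟨⟨𝒳, hcard2, hcover, ?_, hsum𝒳⟩, ?_, ?_⟩
  · intro X hX X' hX' hne
    obtain ⟨Y, hY, rfl⟩ := Finset.mem_image.1 hX
    obtain ⟨Y', hY', rfl⟩ := Finset.mem_image.1 hX'
    exact thin1 Y hY Y' hY' (fun h => hne (h ▸ rfl))
  · intro _ hlk
    refine ⟨𝒳, hcard2, hcover, ?_, hsum𝒳⟩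
    intro X hX X' hX' hne
    obtain ⟨Y, hY, rfl⟩ := Finset.mem_image.1 hX
    obtain ⟨Y', hY', rfl⟩ := Finset.mem_image.1 hX'
    exact thin0 hlk Y hY Y' hY' (fun h => hne (h ▸ rfl))
  · -- part (c)
    intro hl0
    set F := Finset.univ.filter (fun v : V => ∃ e : E, v ∈ ends e) with hF
    have huniv_ne : (Finset.univ : Finset E) ≠ ⊥ := by
      simpa [Finset.bot_eq_empty] using Finset.univ_nonempty.ne_empty
    -- upper bound via the indiscrete partition
    have hub : m ≤ k * (F.card : ℤ) - ℓ := by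
      have := hge (Finpartition.indiscrete huniv_ne)
      simp only [Finpartition.indiscrete_parts, Finset.sum_singleton] at this
      have hFeq : incVertsM ends (Finset.univ : Finset E) = F := by
        ext v
        simp [incVertsM, hF]
      rwa [hFeq] at this
    -- lower bound
    have hFle : (F.card : ℤ) ≤ ∑ Y ∈ 𝒴.parts, ((incVertsM ends Y).card : ℤ) := by
      have hbi : 𝒴.parts.biUnion (fun Y => incVertsM ends Y) = F := by
        ext v
        simp only [Finset.mem_biUnion, hF, Finset.mem_filter, Finset.mem_univ, true_and]
        constructor
        · rintro ⟨Y, _, hv⟩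
          simp only [incVertsM, Finset.mem_filter, Finset.mem_univ, true_and] at hv
          obtain ⟨e, _, hv⟩ := hv
          exact ⟨e, hv⟩
        · rintro ⟨e, hv⟩
          obtain ⟨Y, hY, heY⟩ := 𝒴.exists_mem (Finset.mem_univ e)
          refine ⟨Y, hY, ?_⟩
          simp only [incVertsM, Finset.mem_filter, Finset.mem_univ, true_and]
          exact ⟨e, heY, hv⟩
      have := Finset.card_biUnion_le (s := 𝒴.parts) (t := fun Y => incVertsM ends Y)
      rw [hbi] at this
      exact_mod_cast this
    have hp1 : 1 ≤ 𝒴.parts.card := Finset.card_pos.2 (𝒴.parts_nonempty huniv_ne)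
    have hval_eq : m = k * (∑ Y ∈ 𝒴.parts, ((incVertsM ends Y).card : ℤ))
        - (𝒴.parts.card : ℤ) * ℓ := by
      rw [← hvalm, Finset.sum_sub_distrib, Finset.sum_const, Finset.mul_sum,
        nsmul_eq_mul]
    have hp1' : (1 : ℤ) ≤ (𝒴.parts.card : ℤ) := by exact_mod_cast hp1
    have hlow : k * (F.card : ℤ) - ℓ ≤ m := by
      nlinarith [hval_eq, hFle, hp1']
    exact le_antisymm hub hlow
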